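/- Let W = (w_{ij}) ∈ ℝ^{n×n} be a real symmetric positive definite matrix and let S ⊆ {1,…,n} with |S| ≥ 2. If the sum of the off-diagonal entries over unordered pairs of distinct elements of S is nonnegative, i.e., Σ_{{i,j}⊆S, i≠j} w_{ij} ≥ 0, then w̃(S) ≤ (|S|−1) · χ_S^T W χ_S, where w̃(S) = Σ_{{i,j}⊆S, i≠j} (w_{ij} + w_{ii} + w_{jj}). -/

import Mathlib

/-!
With `D = ∑_{i ∈ S} w_ii` and `P` the sum of the off-diagonal entries over unordered pairs,
`w̃(S) = P + (|S| - 1) D` and `χ_Sᵀ W χ_S = D + 2 P`, so the claim reduces to `(2|S| - 3) P ≥ 0`.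
-/

open Matrix Finset

/-- χ_S^T W χ_S = Σ_{i∈S} Σ_{j∈S} w_{ij}. -/
noncomputable def quadForm {n : ℕ} (W : Matrix (Fin n) (Fin n) ℝ) (S : Finset (Fin n)) : ℝ :=
  ∑ i ∈ S, ∑ j ∈ S, W i j

/-- Sum of `f i j` over unordered pairs {i,j} ⊆ S with i ≠ j (for symmetric `f`). -/
noncomputable def pairSum {n : ℕ} (f : Fin n → Fin n → ℝ) (S : Finset (Fin n)) : ℝ :=
  (∑ p ∈ S.offDiag, f p.1 p.2) / 2

/-- w̃(S) = Σ_{{i,j}⊆S, i≠j} (w_{ij} + w_{ii} + w_{jj}). -/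
noncomputable def modWeight {n : ℕ} (W : Matrix (Fin n) (Fin n) ℝ) (S : Finset (Fin n)) : ℝ :=
  pairSum (fun i j => W i j + W i i + W j j) S

section offDiag

variable {α R : Type*} [DecidableEq α]

theorem Finset.sum_product_eq_sum_diag_add_sum_offDiag {M : Type*} [AddCommMonoid M]
    (s : Finset α) (f : α × α → M) :
    ∑ p ∈ s ×ˢ s, f p = ∑ i ∈ s, f (i, i) + ∑ p ∈ s.offDiag, f p := by
  rw [← diag_union_offDiag, sum_union (disjoint_diag_offDiag s), sum_diag]

theorem Finset.sum_offDiag_fst [CommRing R] (s : Finset α) (f : α → R) :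
    ∑ p ∈ s.offDiag, f p.1 = ((#s : R) - 1) * ∑ i ∈ s, f i := by
  have h := s.sum_product_eq_sum_diag_add_sum_offDiag (fun p => f p.1)
  simp only [sum_product, sum_const, nsmul_eq_mul, ← mul_sum] at h
  linear_combination -h

theorem Finset.sum_offDiag_snd [CommRing R] (s : Finset α) (f : α → R) :
    ∑ p ∈ s.offDiag, f p.2 = ((#s : R) - 1) * ∑ i ∈ s, f i := by
  rw [← s.sum_offDiag_fst f]
  exact sum_nbij' Prod.swap Prod.swap (by simp; grind) (by simp; grind) (by simp) (by simp)
    (by simp)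

end offDiag

theorem modWeight_eq {n : ℕ} (W : Matrix (Fin n) (Fin n) ℝ) (S : Finset (Fin n)) :
    modWeight W S = pairSum (fun i j => W i j) S + ((#S : ℝ) - 1) * ∑ i ∈ S, W i i := by
  rw [modWeight, pairSum, pairSum, sum_add_distrib, sum_add_distrib,
    S.sum_offDiag_fst (fun i => W i i), S.sum_offDiag_snd (fun i => W i i)]
  ring

theorem quadForm_eq {n : ℕ} (W : Matrix (Fin n) (Fin n) ℝ) (S : Finset (Fin n)) :
    quadForm W S = ∑ i ∈ S, W i i + 2 * pairSum (fun i j => W i j) S := by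
  rw [quadForm, pairSum, ← sum_product' S S W,
    S.sum_product_eq_sum_diag_add_sum_offDiag (fun p => W p.1 p.2)]
  ring

theorem stmt14_general {n : ℕ} (W : Matrix (Fin n) (Fin n) ℝ)
    (S : Finset (Fin n)) (hS : 2 ≤ S.card)
    (hoff : 0 ≤ pairSum (fun i j => W i j) S) :
    modWeight W S ≤ ((S.card : ℝ) - 1) * quadForm W S := by
  have hcard : (2 : ℝ) ≤ #S := by exact_mod_cast hS
  rw [modWeight_eq, quadForm_eq]
  nlinarith [mul_nonneg (by linarith : (0 : ℝ) ≤ 2 * #S - 3) hoff]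

theorem stmt14 {n : ℕ} (W : Matrix (Fin n) (Fin n) ℝ) (hW : W.PosDef)
    (S : Finset (Fin n)) (hS : 2 ≤ S.card)
    (hoff : 0 ≤ pairSum (fun i j => W i j) S) :
    modWeight W S ≤ ((S.card : ℝ) - 1) * quadForm W S :=
  stmt14_general W S hS hoff
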